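/- Let R be a commutative integral domain with unit, and let q be an invertible element of R which is not a root of unity (i.e. q^n ≠ 1 for every positive integer n). Let r and k be positive integers, let c_1, …, c_k ∈ R, and let n_1, …, n_k ∈ ℤ^r be pairwise distinct. Let Λ be an additive submonoid of ℤ^r such that the subgroup of ℤ^r generated by Λ has rank r. If for every m ∈ Λ one has Σ_{i=1}^k c_i · q^{n_i ⋅ m} = 0 (where n_i ⋅ m = Σ_{a=1}^r n_i(a) m(a) is the standard dot product and q^s for s ∈ ℤ denotes the integer power of the unit q), then c_i = 0 for all i = 1, …, k. -/

import Mathlib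

/-!
Since `Λ` spans a full-rank sublattice, no nonzero linear form vanishes on it, and a
finite set of nonzero linear forms can be avoided simultaneously by a single `m ∈ Λ`
(perturb a good point along `T • l` for large `T`). Choosing `m` off all hyperplanes
`(nᵢ - nⱼ)^⊥` makes the exponents `dᵢ = nᵢ ⬝ m` distinct; restricting the hypothesis to
`t • m` gives `∑ cᵢ (q^{dᵢ})^t = 0`, and since `q` has infinite order the `q^{dᵢ}` are
distinct, so the Vandermonde determinant forces `c = 0`.
-/

open Function Module Submodule

theorem Submodule.exists_smul_mem_of_finrank_eq {R M : Type*} [CommRing R] [IsDomain R]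
    [AddCommGroup M] [Module R M] [Module.Finite R M] (N : Submodule R M)
    (hN : finrank R N = finrank R M) (x : M) : ∃ a : R, a ≠ 0 ∧ a • x ∈ N := by
  have hquot : finrank R (M ⧸ N) = 0 := by
    have := N.finrank_quotient_add_finrank
    omega
  obtain ⟨a, ha⟩ := (Module.finrank_eq_zero_iff_isTorsion.mp hquot) (x := N.mkQ x)
  exact ⟨a, nonZeroDivisors.coe_ne_zero a, (Quotient.mk_eq_zero N).mp ha⟩

theorem LinearMap.eq_zero_of_finrank_span_eq {R M P : Type*} [CommRing R] [IsDomain R]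
    [AddCommGroup M] [Module R M] [Module.Finite R M] [AddCommGroup P] [Module R P]
    [IsTorsionFree R P] {S : Set M} (hS : finrank R (span R S) = finrank R M)
    (f : M →ₗ[R] P) (hf : ∀ m ∈ S, f m = 0) : f = 0 := by
  ext x
  obtain ⟨a, ha, hax⟩ := (span R S).exists_smul_mem_of_finrank_eq hS x
  have hker : span R S ≤ LinearMap.ker f := span_le.mpr hf
  have : a • f x = 0 := by rw [← map_smul]; exact hker hax
  exact (smul_eq_zero.mp this).resolve_left ha

theorem exists_mem_dotProduct_ne_zero {ι : Type*} [Fintype ι] {S : Set (ι → ℤ)}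
    (hS : finrank ℤ (span ℤ S) = Fintype.card ι) {v : ι → ℤ} (hv : v ≠ 0) :
    ∃ m ∈ S, v ⬝ᵥ m ≠ 0 := by
  by_contra! hvS
  have hzero := LinearMap.eq_zero_of_finrank_span_eq (by rwa [finrank_fintype_fun_eq_card])
    (dotProductBilin ℤ ℤ v) hvS
  exact hv (dotProduct_self_eq_zero.mp (LinearMap.congr_fun hzero v))

theorem Int.exists_nat_forall_add_mul_ne_zero {ι : Type*} (s : Finset ι) (a b : ι → ℤ)
    (hab : ∀ i ∈ s, a i ≠ 0 ∨ b i ≠ 0) : ∃ T : ℕ, ∀ i ∈ s, a i + T * b i ≠ 0 := by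
  refine ⟨s.sup (fun i => (a i).natAbs) + 1, fun i hi hzero => ?_⟩
  set T := s.sup (fun i => (a i).natAbs) + 1
  have haT : (a i).natAbs < T := Nat.lt_succ_of_le (Finset.le_sup (f := fun i => (a i).natAbs) hi)
  by_cases hb : b i = 0
  · simp only [hb, mul_zero, add_zero] at hzero
    exact (hab i hi).elim (· hzero) (· hb)
  · have : (a i).natAbs = T * (b i).natAbs := by
      rw [eq_neg_of_add_eq_zero_left hzero, Int.natAbs_neg, Int.natAbs_mul, Int.natAbs_natCast]
    have := Nat.le_mul_of_pos_right T (Int.natAbs_pos.mpr hb)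
    omega

theorem AddSubmonoid.exists_mem_forall_ne_zero {M ι : Type*} [AddCommMonoid M] [Finite ι]
    (Λ : AddSubmonoid M) (f : ι → M →+ ℤ) (hf : ∀ i, ∃ m ∈ Λ, f i m ≠ 0) :
    ∃ m ∈ Λ, ∀ i, f i m ≠ 0 := by
  classical
  have := Fintype.ofFinite ι
  suffices ∀ s : Finset ι, ∃ m ∈ Λ, ∀ i ∈ s, f i m ≠ 0 by
    simpa using this Finset.univ
  intro s
  induction s using Finset.induction_on with
  | empty => exact ⟨0, Λ.zero_mem, by simp⟩
  | insert i₀ s _ ih =>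
    obtain ⟨m, hm, hms⟩ := ih
    obtain ⟨l, hl, hli₀⟩ := hf i₀
    obtain ⟨T, hT⟩ := Int.exists_nat_forall_add_mul_ne_zero (insert i₀ s) (fun i => f i m)
      (fun i => f i l) (by simp_all)
    refine ⟨m + T • l, Λ.add_mem hm (Λ.nsmul_mem hl T), fun i hi => ?_⟩
    simpa [map_nsmul] using hT i hi

theorem exists_mem_injective_dotProduct {ι κ : Type*} [Fintype ι] [Finite κ]
    {Λ : AddSubmonoid (ι → ℤ)} (hΛ : finrank ℤ (span ℤ (Λ : Set (ι → ℤ))) = Fintype.card ι)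
    {n : κ → ι → ℤ} (hn : Injective n) : ∃ m ∈ Λ, Injective fun i => n i ⬝ᵥ m := by
  obtain ⟨m, hm, hne⟩ := Λ.exists_mem_forall_ne_zero
    (fun p : {p : κ × κ // p.1 ≠ p.2} => (dotProductBilin ℤ ℤ (n p.1.1 - n p.1.2)).toAddMonoidHom)
    fun p => exists_mem_dotProduct_ne_zero hΛ (sub_ne_zero.mpr (hn.ne p.2))
  refine ⟨m, hm, fun i j hij => by_contra fun hij' => hne ⟨(i, j), hij'⟩ ?_⟩
  simpa [sub_dotProduct, sub_eq_zero] using hij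

theorem Units.eq_zero_of_forall_sum_mul_zpow_mul_eq_zero {R : Type*} [CommRing R] [IsDomain R]
    {q : Rˣ} (hq : ¬IsOfFinOrder q) {k : ℕ} {c : Fin k → R} {d : Fin k → ℤ} (hd : Injective d)
    (h : ∀ t : ℕ, ∑ i, c i * ((q ^ (t * d i) : Rˣ) : R) = 0) : c = 0 := by
  have hinj : Injective fun i => ((q ^ d i : Rˣ) : R) :=
    Units.val_injective.comp ((injective_zpow_iff_not_isOfFinOrder.mpr hq).comp hd)
  refine Matrix.eq_zero_of_forall_pow_sum_mul_pow_eq_zero hinj fun t => ?_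
  simpa [mul_comm (t : ℤ), zpow_mul] using h t

theorem skein_lemma_root_of_unity_general
    {R : Type*} [CommRing R] [IsDomain R] (q : Rˣ)
    (hq : ∀ n : ℕ, 0 < n → q ^ n ≠ 1)
    (r k : ℕ)
    (c : Fin k → R) (n : Fin k → (Fin r → ℤ))
    (hn : Function.Injective n)
    (Λ : AddSubmonoid (Fin r → ℤ))
    (hΛ : Module.finrank ℤ (Submodule.span ℤ (Λ : Set (Fin r → ℤ))) = r)
    (h : ∀ m ∈ Λ, ∑ i, c i * ((q ^ (∑ a, n i a * m a) : Rˣ) : R) = 0) :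
    ∀ i, c i = 0 := by
  have hq' : ¬IsOfFinOrder q := by
    rw [isOfFinOrder_iff_pow_eq_one]
    rintro ⟨N, hN, hqN⟩
    exact hq N hN hqN
  obtain ⟨m, hm, hinj⟩ := exists_mem_injective_dotProduct (by simpa using hΛ) hn
  refine congrFun (Units.eq_zero_of_forall_sum_mul_zpow_mul_eq_zero hq' hinj fun t => ?_)
  have ht : ∀ i, n i ⬝ᵥ (t • m) = t * n i ⬝ᵥ m := fun i => by
    rw [dotProduct_smul, nsmul_eq_mul]
  simp only [← ht]
  exact h (t • m) (Λ.nsmul_mem hm t)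

/-- If `q` is a unit of a commutative domain `R` which is not a root of
unity, `n₁,…,n_k ∈ ℤ^r` are pairwise distinct, and `Λ` is an additive submonoid of
`ℤ^r` whose generated subgroup has rank `r`, then `∑ i, c_i • q^(n_i ⋅ m) = 0` for all
`m ∈ Λ` forces all coefficients `c_i` to vanish. -/
theorem skein_lemma_root_of_unity
    {R : Type*} [CommRing R] [IsDomain R] (q : Rˣ)
    (hq : ∀ n : ℕ, 0 < n → q ^ n ≠ 1)
    (r k : ℕ) (hr : 0 < r) (hk : 0 < k)
    (c : Fin k → R) (n : Fin k → (Fin r → ℤ))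
    (hn : Function.Injective n)
    (Λ : AddSubmonoid (Fin r → ℤ))
    (hΛ : Module.finrank ℤ (Submodule.span ℤ (Λ : Set (Fin r → ℤ))) = r)
    (h : ∀ m ∈ Λ, ∑ i, c i * ((q ^ (∑ a, n i a * m a) : Rˣ) : R) = 0) :
    ∀ i, c i = 0 :=
  skein_lemma_root_of_unity_general q hq r k c n hn Λ hΛ h
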